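/- Let P be a convex polygon, ω ∈ (0, π), and v a vertex of P with interior angle α(v) < ω. The set of directions (bisector directions) of minimal ω-wedges of P whose apex is at v is a closed arc of directions of angular width exactly ω − α(v). -/

import Mathlib

open EuclideanGeometry Real Set
open scoped Classical

noncomputable section

abbrev Plane := EuclideanSpace ℝ (Fin 2)

/-- The unit vector in direction `θ`. -/
def unitVec (θ : ℝ) : Plane := (WithLp.equiv 2 (Fin 2 → ℝ)).symm ![Real.cos θ, Real.sin θ]

/-- The closed ray from `x` in direction `d`. -/
def ray (x d : Plane) : Set Plane := {y | ∃ t : ℝ, 0 ≤ t ∧ y = x + t • d}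

/-- The closed wedge with apex `x` bounded by the rays in directions `d₁` and `d₂`. -/
def wedgeSet (x d₁ d₂ : Plane) : Set Plane :=
  {y | ∃ s t : ℝ, 0 ≤ s ∧ 0 ≤ t ∧ y = x + s • d₁ + t • d₂}

/-- The wedge with apex `x`, arm directions `d₁`, `d₂` (unit vectors at angle `ω`),
is a minimal `ω`-wedge for `P`: it contains `P` and both arms touch `P`. -/
def IsMinWedge (P : Set Plane) (ω : ℝ) (x d₁ d₂ : Plane) : Prop :=
  ‖d₁‖ = 1 ∧ ‖d₂‖ = 1 ∧ InnerProductGeometry.angle d₁ d₂ = ω ∧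
  P ⊆ wedgeSet x d₁ d₂ ∧ (P ∩ ray x d₁).Nonempty ∧ (P ∩ ray x d₂).Nonempty

/-- The `ω`-cloud of `P`: the locus of apices of all minimal `ω`-wedges. -/
def omegaCloud (P : Set Plane) (ω : ℝ) : Set Plane := {x | ∃ d₁ d₂, IsMinWedge P ω x d₁ d₂}

/-- `V` is the vertex set of a convex polygon: at least 3 points, in strictly convex position. -/
def IsConvexPolygon (V : Finset Plane) : Prop :=
  3 ≤ V.card ∧ ∀ v ∈ V, v ∉ convexHull ℝ ((V.erase v : Finset Plane) : Set Plane)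

/-- The interior angle of a convex body `P` at a boundary point `v`, defined as the
supremum of angles `∠ a v b` over `a, b ∈ P \ {v}`. -/
def interiorAngle (P : Set Plane) (v : Plane) : ℝ :=
  sSup {θ : ℝ | ∃ a ∈ P, ∃ b ∈ P, a ≠ v ∧ b ≠ v ∧ θ = EuclideanGeometry.angle a v b}

/-- A circular arc, given by center, radius, starting angle and angular extent. -/
structure CircArc where
  center : Plane
  radius : ℝ
  start : ℝ
  delta : ℝ

/-- The (closed) point set of a circular arc. -/
def CircArc.points (A : CircArc) : Set Plane :=
  {p | ∃ θ ∈ Set.Icc A.start (A.start + A.delta), p = A.center + A.radius • unitVec θ}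

/-- The relative interior of a circular arc. -/
def CircArc.intPoints (A : CircArc) : Set Plane :=
  {p | ∃ θ ∈ Set.Ioo A.start (A.start + A.delta), p = A.center + A.radius • unitVec θ}

/-- The start point of an arc when it is traversed clockwise. -/
def CircArc.cwStart (A : CircArc) : Plane := A.center + A.radius • unitVec (A.start + A.delta)

/-- The end point of an arc when it is traversed clockwise. -/
def CircArc.cwEnd (A : CircArc) : Plane := A.center + A.radius • unitVec A.start

/-- The set of (bisector) directions of minimal `ω`-wedges of `P` with apex `x`. -/
def wedgeDirs (P : Set Plane) (ω : ℝ) (x : Plane) : Set Plane :=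
  {d | ∃ d₁ d₂, IsMinWedge P ω x d₁ d₂ ∧ d = (‖d₁ + d₂‖)⁻¹ • (d₁ + d₂)}

/-- On every interior point of the arc `A`, the minimal `ω`-wedge of `P` touches `P`
at `p` (with one arm) and `q` (with the other arm). -/
def ContactPair (P : Set Plane) (ω : ℝ) (A : CircArc) (p q : Plane) : Prop :=
  ∀ x ∈ A.intPoints, ∃ d₁ d₂, IsMinWedge P ω x d₁ d₂ ∧ p ∈ ray x d₁ ∧ q ∈ ray x d₂

/-! Separating `v` from the other vertices puts all of them in a sector
`{v + r • unitVec ψ | r > 0, ψ ∈ [β, β + δ]}` with `0 < δ < π`, each of whose bounding rays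
carries a vertex; hence `P` lies in that sector and `α(v) = δ`. A wedge with apex `v` and arms
`unitVec s`, `unitVec (s + ω)` contains `P` iff it contains those two extreme vertices, i.e. iff
`[β, β + δ] ⊆ [s, s + ω]` up to a multiple of `2π`. So the bisector direction `s + ω / 2` sweeps
exactly `[β + δ - ω / 2, β + ω / 2]`, an arc of width `ω - δ`. -/

@[simp] lemma unitVec_apply_zero (θ : ℝ) : unitVec θ 0 = cos θ := rfl

@[simp] lemma unitVec_apply_one (θ : ℝ) : unitVec θ 1 = sin θ := rfl

lemma Plane.ext {p q : Plane} (h0 : p 0 = q 0) (h1 : p 1 = q 1) : p = q := by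
  ext i; fin_cases i; exacts [h0, h1]

lemma inner_unitVec (s t : ℝ) : inner ℝ (unitVec s) (unitVec t) = cos (s - t) := by
  simp [PiLp.inner_apply, Fin.sum_univ_two, cos_sub, mul_comm]

@[simp] lemma norm_unitVec (t : ℝ) : ‖unitVec t‖ = 1 := by
  rw [norm_eq_sqrt_real_inner, inner_unitVec, sub_self, cos_zero, sqrt_one]

lemma unitVec_add_int_mul_two_pi (θ : ℝ) (k : ℤ) : unitVec (θ + k * (2 * π)) = unitVec θ := by
  apply Plane.ext <;> simp

lemma eq_norm_smul_unitVec (x : Plane) : ∃ t, x = ‖x‖ • unitVec t := by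
  set z : ℂ := ⟨x 0, x 1⟩
  have hz : ‖z‖ = ‖x‖ := by
    rw [Complex.norm_eq_sqrt_sq_add_sq, EuclideanSpace.norm_eq, Fin.sum_univ_two]
    simp [z, sq_abs]
  refine ⟨z.arg, ?_⟩
  rcases eq_or_ne z 0 with h | h
  · have : x = 0 := by
      apply Plane.ext
      · simpa [z] using congrArg Complex.re h
      · simpa [z] using congrArg Complex.im h
    simp [this]
  · have hx : ‖x‖ ≠ 0 := by rw [← hz]; exact norm_ne_zero_iff.mpr h
    apply Plane.ext
    · simp [Complex.cos_arg h, ← hz, mul_div_cancel₀ _ (hz ▸ hx), z]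
    · simp [Complex.sin_arg, ← hz, mul_div_cancel₀ _ (hz ▸ hx), z]

lemma angle_unitVec {s t : ℝ} (h : |s - t| ≤ π) :
    InnerProductGeometry.angle (unitVec s) (unitVec t) = |s - t| := by
  rw [InnerProductGeometry.angle, inner_unitVec, norm_unitVec, norm_unitVec, ← cos_abs]
  simpa using arccos_cos (abs_nonneg _) h

lemma unitVec_add_unitVec (s ω : ℝ) :
    unitVec s + unitVec (s + ω) = (2 * cos (ω / 2)) • unitVec (s + ω / 2) := by
  have h₁ : s = (s + ω / 2) - ω / 2 := by ring
  have h₂ : s + ω = (s + ω / 2) + ω / 2 := by ring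
  apply Plane.ext <;>
  · rw [PiLp.add_apply, PiLp.smul_apply, h₂]
    nth_rewrite 1 [h₁]
    simp only [unitVec_apply_zero, unitVec_apply_one, sin_add, sin_sub, cos_add, cos_sub,
      smul_eq_mul]
    ring

lemma sin_smul_unitVec_add (s x ω : ℝ) :
    sin (ω - x) • unitVec s + sin x • unitVec (s + ω) = sin ω • unitVec (s + x) := by
  apply Plane.ext <;>
  · simp only [PiLp.add_apply, PiLp.smul_apply, smul_eq_mul, unitVec_apply_zero,
      unitVec_apply_one, sin_add, cos_add, sin_sub]
    ring

lemma inner_unitVec_add_pi_div_two (a b : ℝ) :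
    inner ℝ (unitVec (a + π / 2)) (unitVec b) = sin (b - a) := by
  rw [inner_unitVec, show a + π / 2 - b = π / 2 - (b - a) by ring, cos_pi_div_two_sub]

lemma inner_unitVec_sub_pi_div_two (a b : ℝ) :
    inner ℝ (unitVec (a - π / 2)) (unitVec b) = sin (a - b) := by
  rw [inner_unitVec, show a - π / 2 - b = -(π / 2 - (a - b)) by ring, cos_neg, cos_pi_div_two_sub]

section Wedge

variable {x d₁ d₂ e₁ e₂ : Plane}

lemma self_mem_wedgeSet : x ∈ wedgeSet x d₁ d₂ := ⟨0, 0, le_rfl, le_rfl, by simp⟩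

lemma wedgeSet_comm : wedgeSet x d₁ d₂ = wedgeSet x d₂ d₁ := by
  ext y
  constructor <;> rintro ⟨s, t, hs, ht, rfl⟩ <;> exact ⟨t, s, ht, hs, by abel⟩

lemma convex_wedgeSet : Convex ℝ (wedgeSet x d₁ d₂) := by
  rintro _ ⟨s, t, hs, ht, rfl⟩ _ ⟨s', t', hs', ht', rfl⟩ a b ha hb hab
  refine ⟨a * s + b * s', a * t + b * t', by positivity, by positivity, ?_⟩
  linear_combination (norm := module) hab • x

lemma wedgeSet_subset_wedgeSet (h₁ : x + d₁ ∈ wedgeSet x e₁ e₂)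
    (h₂ : x + d₂ ∈ wedgeSet x e₁ e₂) : wedgeSet x d₁ d₂ ⊆ wedgeSet x e₁ e₂ := by
  obtain ⟨a, b, ha, hb, h₁⟩ := h₁
  obtain ⟨c, d, hc, hd, h₂⟩ := h₂
  rw [add_assoc, add_right_inj] at h₁ h₂
  rintro _ ⟨s, t, hs, ht, rfl⟩
  refine ⟨s * a + t * c, s * b + t * d, by positivity, by positivity, ?_⟩
  rw [add_assoc, add_assoc, h₁, h₂]
  module

end Wedge

section PolarWedge

variable {v : Plane} {s ω ψ r : ℝ}

lemma add_smul_unitVec_mem_wedgeSet (hω : ω ∈ Ioo 0 π) (hr : 0 ≤ r)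
    (hψ : ψ ∈ Icc s (s + ω)) : v + r • unitVec ψ ∈ wedgeSet v (unitVec s) (unitVec (s + ω)) := by
  obtain ⟨hω0, hωπ⟩ := hω
  obtain ⟨hψ₁, hψ₂⟩ := hψ
  have hsinω : 0 < sin ω := sin_pos_of_pos_of_lt_pi hω0 hωπ
  refine ⟨r / sin ω * sin (ω - (ψ - s)), r / sin ω * sin (ψ - s),
    mul_nonneg (by positivity) (sin_nonneg_of_nonneg_of_le_pi (by linarith) (by linarith)),
    mul_nonneg (by positivity) (sin_nonneg_of_nonneg_of_le_pi (by linarith) (by linarith)), ?_⟩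
  rw [add_assoc, ← smul_smul, ← smul_smul, ← smul_add, sin_smul_unitVec_add, smul_smul,
    div_mul_cancel₀ _ hsinω.ne', add_sub_cancel]

-- Pairing with the normals of the two arms turns membership into two sign conditions.
lemma sin_nonneg_of_add_smul_unitVec_mem_wedgeSet (hω : 0 ≤ sin ω) (hr : 0 < r)
    (h : v + r • unitVec ψ ∈ wedgeSet v (unitVec s) (unitVec (s + ω))) :
    0 ≤ sin (ψ - s) ∧ 0 ≤ sin (s + ω - ψ) := by
  obtain ⟨p, q, hp, hq, h⟩ := h
  rw [add_assoc, add_right_inj] at h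
  have h₁ := congrArg (inner ℝ (unitVec (s + π / 2))) h
  have h₂ := congrArg (inner ℝ (unitVec (s + ω - π / 2))) h
  simp only [inner_add_right, real_inner_smul_right, inner_unitVec_add_pi_div_two,
    inner_unitVec_sub_pi_div_two, sub_self, sin_zero, add_sub_cancel_left] at h₁ h₂
  constructor
  · exact nonneg_of_mul_nonneg_right (h₁ ▸ by positivity) hr
  · exact nonneg_of_mul_nonneg_right (h₂ ▸ by positivity) hr

lemma exists_int_add_mem_Icc_of_sin_nonneg {β γ : ℝ} (hβγ : γ - β ∈ Ioo 0 π)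
    (h₁ : 0 ≤ sin (ψ - β)) (h₂ : 0 ≤ sin (γ - ψ)) : ∃ k : ℤ, ψ + k * (2 * π) ∈ Icc β γ := by
  obtain ⟨k, hk₁, hk₂⟩ : ∃ k : ℤ, ψ + k * (2 * π) ∈ Ico β (β + 2 * π) :=
    ⟨-toIcoDiv two_pi_pos β ψ, by
      simpa [zsmul_eq_mul, ← sub_eq_add_neg] using sub_toIcoDiv_zsmul_mem_Ico two_pi_pos β ψ⟩
  refine ⟨k, hk₁, ?_⟩
  set x := ψ + k * (2 * π)
  have hsin₁ : 0 ≤ sin (x - β) := by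
    rwa [show x - β = ψ - β + k * (2 * π) by ring, sin_add_int_mul_two_pi]
  have hsin₂ : 0 ≤ sin (γ - x) := by
    rwa [show γ - x = γ - ψ + (-k : ℤ) * (2 * π) by push_cast; ring, sin_add_int_mul_two_pi]
  have hxπ : x - β ≤ π := by
    by_contra! h
    have := sin_pos_of_pos_of_lt_pi (x := x - β - π) (by linarith) (by linarith)
    rw [sin_sub_pi] at this
    linarith
  by_contra! h
  linarith [sin_neg_of_neg_of_neg_pi_lt (x := γ - x) (by linarith) (by linarith [hβγ.1])]

lemma exists_int_add_mem_Icc_of_mem_wedgeSet (hω : ω ∈ Ioo 0 π) (hr : 0 < r)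
    (h : v + r • unitVec ψ ∈ wedgeSet v (unitVec s) (unitVec (s + ω))) :
    ∃ k : ℤ, ψ + k * (2 * π) ∈ Icc s (s + ω) :=
  have hsin := sin_nonneg_of_add_smul_unitVec_mem_wedgeSet
    (sin_nonneg_of_nonneg_of_le_pi hω.1.le hω.2.le) hr h
  exists_int_add_mem_Icc_of_sin_nonneg (by simpa using hω) hsin.1 hsin.2

lemma exists_polar_of_mem_wedgeSet {a : Plane} (hω : ω ∈ Ioo 0 π)
    (ha : a ∈ wedgeSet v (unitVec s) (unitVec (s + ω))) (hav : a ≠ v) :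
    ∃ r : ℝ, 0 < r ∧ ∃ ψ ∈ Icc s (s + ω), a = v + r • unitVec ψ := by
  obtain ⟨t, ht⟩ := eq_norm_smul_unitVec (a - v)
  have hr : 0 < ‖a - v‖ := norm_pos_iff.mpr (sub_ne_zero.mpr hav)
  have hat : a = v + ‖a - v‖ • unitVec t := by rw [← ht]; abel
  obtain ⟨k, hk⟩ := exists_int_add_mem_Icc_of_mem_wedgeSet hω hr (hat ▸ ha)
  exact ⟨‖a - v‖, hr, _, hk, by rwa [unitVec_add_int_mul_two_pi]⟩

end PolarWedge

lemma add_smul_unitVec_ne {v : Plane} {r : ℝ} (hr : r ≠ 0) (ψ : ℝ) : v + r • unitVec ψ ≠ v := by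
  have : unitVec ψ ≠ 0 := norm_ne_zero_iff.mp (by simp)
  simp [hr, this]

lemma angle_add_smul_unitVec {v : Plane} {ra rb ψa ψb : ℝ} (hra : 0 < ra) (hrb : 0 < rb)
    (h : |ψa - ψb| ≤ π) : ∠ (v + ra • unitVec ψa) v (v + rb • unitVec ψb) = |ψa - ψb| := by
  rw [EuclideanGeometry.angle, vsub_eq_sub, vsub_eq_sub, add_sub_cancel_left, add_sub_cancel_left,
    InnerProductGeometry.angle_smul_left_of_pos _ _ hra,
    InnerProductGeometry.angle_smul_right_of_pos _ _ hrb, angle_unitVec h]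

lemma interiorAngle_eq_of_subset_wedgeSet {P : Set Plane} {v : Plane} {β δ r₁ r₂ : ℝ}
    (hδ : δ ∈ Ioo 0 π) (hP : P ⊆ wedgeSet v (unitVec β) (unitVec (β + δ)))
    (hr₁ : 0 < r₁) (h₁ : v + r₁ • unitVec β ∈ P)
    (hr₂ : 0 < r₂) (h₂ : v + r₂ • unitVec (β + δ) ∈ P) :
    interiorAngle P v = δ := by
  have hbound : ∀ θ ∈ {θ : ℝ | ∃ a ∈ P, ∃ b ∈ P, a ≠ v ∧ b ≠ v ∧ θ = ∠ a v b}, θ ≤ δ := by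
    rintro θ ⟨a, ha, b, hb, hav, hbv, rfl⟩
    obtain ⟨ra, hra, ψa, hψa, rfl⟩ := exists_polar_of_mem_wedgeSet hδ (hP ha) hav
    obtain ⟨rb, hrb, ψb, hψb, rfl⟩ := exists_polar_of_mem_wedgeSet hδ (hP hb) hbv
    have : |ψa - ψb| ≤ δ :=
      abs_sub_le_iff.mpr ⟨by linarith [hψa.2, hψb.1], by linarith [hψa.1, hψb.2]⟩
    rw [angle_add_smul_unitVec hra hrb (this.trans hδ.2.le)]
    exact this
  have hmem : δ ∈ {θ : ℝ | ∃ a ∈ P, ∃ b ∈ P, a ≠ v ∧ b ≠ v ∧ θ = ∠ a v b} := by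
    refine ⟨_, h₂, _, h₁, add_smul_unitVec_ne hr₂.ne' _, add_smul_unitVec_ne hr₁.ne' _, ?_⟩
    rw [angle_add_smul_unitVec hr₂ hr₁ (by simpa [abs_of_pos hδ.1] using hδ.2.le)]
    simp [abs_of_pos hδ.1]
  exact le_antisymm (csSup_le ⟨δ, hmem⟩ hbound) (le_csSup ⟨δ, hbound⟩ hmem)

lemma exists_unitVec_of_norm_eq_one {d : Plane} (hd : ‖d‖ = 1) : ∃ t, d = unitVec t := by
  simpa [hd] using eq_norm_smul_unitVec d

lemma exists_unitVec_of_angle_eq {d₁ d₂ : Plane} {ω : ℝ} (hd₁ : ‖d₁‖ = 1) (hd₂ : ‖d₂‖ = 1)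
    (hω : InnerProductGeometry.angle d₁ d₂ = ω) :
    ∃ s, (d₁ = unitVec s ∧ d₂ = unitVec (s + ω)) ∨ (d₁ = unitVec (s + ω) ∧ d₂ = unitVec s) := by
  obtain ⟨t₁, rfl⟩ := exists_unitVec_of_norm_eq_one hd₁
  obtain ⟨t₂, rfl⟩ := exists_unitVec_of_norm_eq_one hd₂
  have hcos : cos (t₁ - t₂) = cos ω := by
    rw [← hω, InnerProductGeometry.cos_angle, inner_unitVec]; simp
  obtain ⟨k, hk | hk⟩ := cos_eq_cos_iff.mp hcos
  · refine ⟨t₂, Or.inr ⟨?_, rfl⟩⟩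
    rw [← unitVec_add_int_mul_two_pi t₁ k, hk]; ring_nf
  · refine ⟨t₁, Or.inl ⟨rfl, ?_⟩⟩
    rw [← unitVec_add_int_mul_two_pi t₂ k, hk]; ring_nf

lemma bisector_unitVec {ω : ℝ} (hω : ω ∈ Ioo 0 π) (s : ℝ) :
    ‖unitVec s + unitVec (s + ω)‖⁻¹ • (unitVec s + unitVec (s + ω)) = unitVec (s + ω / 2) := by
  have hcos : 0 < 2 * cos (ω / 2) :=
    mul_pos two_pos (cos_pos_of_mem_Ioo ⟨by linarith [hω.1, pi_pos], by linarith [hω.2]⟩)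
  rw [unitVec_add_unitVec, norm_smul, norm_unitVec, mul_one, Real.norm_of_nonneg hcos.le,
    smul_smul, inv_mul_cancel₀ hcos.ne', one_smul]

lemma int_eq_of_abs_sub_mul_lt {k₁ k₂ : ℤ} {p : ℝ} (hp : 0 < p) (h : |(k₁ - k₂ : ℝ) * p| < p) :
    k₁ = k₂ := by
  rw [abs_mul, abs_of_pos hp, mul_lt_iff_lt_one_left hp] at h
  have : |k₁ - k₂| < 1 := by exact_mod_cast h
  have := abs_lt.mp this
  omega

section WedgeDirs

variable {P : Set Plane} {v : Plane} {ω β δ r₁ r₂ : ℝ}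

-- Both extreme directions land in the same `2π`-translate of `[s, s + ω]`, because `δ < ω < π`.
lemma exists_bisector_mem_Icc (hω : ω ∈ Ioo 0 π) (hδ : 0 < δ) (hδω : δ < ω) (s : ℝ)
    (hr₁ : 0 < r₁) (h₁ : v + r₁ • unitVec β ∈ wedgeSet v (unitVec s) (unitVec (s + ω)))
    (hr₂ : 0 < r₂) (h₂ : v + r₂ • unitVec (β + δ) ∈ wedgeSet v (unitVec s) (unitVec (s + ω))) :
    ∃ θ ∈ Icc (β + δ - ω / 2) (β + ω / 2), unitVec (s + ω / 2) = unitVec θ := by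
  obtain ⟨k₁, hk₁⟩ := exists_int_add_mem_Icc_of_mem_wedgeSet hω hr₁ h₁
  obtain ⟨k₂, hk₂⟩ := exists_int_add_mem_Icc_of_mem_wedgeSet hω hr₂ h₂
  obtain rfl : k₂ = k₁ := int_eq_of_abs_sub_mul_lt two_pi_pos <| abs_lt.mpr
    ⟨by linarith [hk₁.2, hk₂.1, hω.2], by linarith [hk₁.1, hk₂.2, hω.2]⟩
  refine ⟨s + ω / 2 + (-k₂ : ℤ) * (2 * π), ⟨?_, ?_⟩, (unitVec_add_int_mul_two_pi _ _).symm⟩ <;>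
  · push_cast; linarith [hk₁.1, hk₂.2]

lemma wedgeDirs_eq_of_subset_wedgeSet (hω : ω ∈ Ioo 0 π) (hδ : 0 < δ) (hδω : δ < ω)
    (hvP : v ∈ P) (hP : P ⊆ wedgeSet v (unitVec β) (unitVec (β + δ)))
    (hr₁ : 0 < r₁) (h₁ : v + r₁ • unitVec β ∈ P)
    (hr₂ : 0 < r₂) (h₂ : v + r₂ • unitVec (β + δ) ∈ P) :
    wedgeDirs P ω v = {p | ∃ θ ∈ Icc (β + δ - ω / 2) (β + ω / 2), p = unitVec θ} := by
  have key : ∀ s, P ⊆ wedgeSet v (unitVec s) (unitVec (s + ω)) →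
      ∃ θ ∈ Icc (β + δ - ω / 2) (β + ω / 2),
        ‖unitVec s + unitVec (s + ω)‖⁻¹ • (unitVec s + unitVec (s + ω)) = unitVec θ := by
    intro s hs
    rw [bisector_unitVec hω]
    exact exists_bisector_mem_Icc hω hδ hδω s hr₁ (hs h₁) hr₂ (hs h₂)
  ext p
  constructor
  · rintro ⟨d₁, d₂, ⟨hd₁, hd₂, hang, hsub, -, -⟩, rfl⟩
    obtain ⟨s, ⟨rfl, rfl⟩ | ⟨rfl, rfl⟩⟩ := exists_unitVec_of_angle_eq hd₁ hd₂ hang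
    · exact key s hsub
    · rw [wedgeSet_comm] at hsub
      rw [add_comm (unitVec (s + ω))]
      exact key s hsub
  · rintro ⟨θ, hθ, rfl⟩
    set s := θ - ω / 2 with hs
    have hmem : ∀ ψ ∈ Icc β (β + δ), v + unitVec ψ ∈ wedgeSet v (unitVec s) (unitVec (s + ω)) :=
      fun ψ hψ ↦ by
        simpa using add_smul_unitVec_mem_wedgeSet (v := v) hω zero_le_one
          ⟨by linarith [hψ.1, hθ.2], by linarith [hψ.2, hθ.1]⟩
    refine ⟨unitVec s, unitVec (s + ω), ⟨by simp, by simp, ?_, ?_, ?_, ?_⟩, ?_⟩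
    · rw [angle_unitVec] <;> simp [abs_of_pos hω.1, hω.2.le]
    · exact hP.trans (wedgeSet_subset_wedgeSet (hmem β (by simp [hδ.le]))
        (hmem (β + δ) (by simp [hδ.le])))
    · exact ⟨v, hvP, 0, le_rfl, by simp⟩
    · exact ⟨v, hvP, 0, le_rfl, by simp⟩
    · rw [bisector_unitVec hω, hs, sub_add_cancel]

end WedgeDirs

lemma exists_forall_inner_unitVec_pos {t : Set Plane} {v : Plane} (ht : Convex ℝ t)
    (htc : IsClosed t) (hv : v ∉ t) : ∃ φ, ∀ w ∈ t, 0 < inner ℝ (unitVec φ) (w - v) := by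
  obtain ⟨f, u, hfv, hft⟩ := geometric_hahn_banach_point_closed ht htc hv
  set z := (InnerProductSpace.toDual ℝ Plane).symm f
  have hz : ∀ w ∈ t, 0 < inner ℝ z (w - v) := fun w hw ↦ by
    rw [inner_sub_right, InnerProductSpace.toDual_symm_apply, InnerProductSpace.toDual_symm_apply]
    linarith [hft w hw]
  obtain ⟨φ, hφ⟩ := eq_norm_smul_unitVec z
  refine ⟨φ, fun w hw ↦ pos_of_mul_pos_right ?_ (norm_nonneg z)⟩
  rw [← real_inner_smul_left, ← hφ]
  exact hz w hw

lemma exists_polar_of_inner_unitVec_pos {φ : ℝ} {x : Plane} (h : 0 < inner ℝ (unitVec φ) x) :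
    ∃ r : ℝ, 0 < r ∧ ∃ ψ ∈ Ioo (φ - π / 2) (φ + π / 2), x = r • unitVec ψ := by
  obtain ⟨t, ht⟩ := eq_norm_smul_unitVec x
  have hx : 0 < ‖x‖ := norm_pos_iff.mpr (by rintro rfl; simp at h)
  obtain ⟨k, hk₁, hk₂⟩ : ∃ k : ℤ, t + k * (2 * π) ∈ Ioc (φ - π) (φ - π + 2 * π) :=
    ⟨-toIocDiv two_pi_pos (φ - π) t, by
      simpa [zsmul_eq_mul, ← sub_eq_add_neg] using
        sub_toIocDiv_zsmul_mem_Ioc two_pi_pos (φ - π) t⟩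
  set ψ := t + k * (2 * π)
  have hcos : 0 < cos |ψ - φ| := by
    rw [ht, real_inner_smul_right, ← unitVec_add_int_mul_two_pi t k, inner_unitVec] at h
    rw [cos_abs, ← cos_neg, neg_sub]
    exact pos_of_mul_pos_right h hx.le
  have hψ : |ψ - φ| < π / 2 := by
    by_contra! hle
    exact hcos.not_ge <| cos_nonpos_of_pi_div_two_le_of_le hle
      ((abs_sub_le_iff.mpr ⟨by linarith, by linarith⟩ : |ψ - φ| ≤ π).trans (by linarith [pi_pos]))
  obtain ⟨hψ₁, hψ₂⟩ := abs_lt.mp hψ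
  exact ⟨‖x‖, hx, ψ, ⟨by linarith, by linarith⟩, by rw [unitVec_add_int_mul_two_pi, ← ht]⟩

namespace IsConvexPolygon

variable {V : Finset Plane} {v : Plane}

lemma eq_of_add_smul_unitVec_mem (hV : IsConvexPolygon V) (hv : v ∈ V) {ψ r₁ r₂ : ℝ}
    (hr₁ : 0 < r₁) (hr₂ : 0 < r₂) (h₁ : v + r₁ • unitVec ψ ∈ V) (h₂ : v + r₂ • unitVec ψ ∈ V) :
    r₁ = r₂ := by
  wlog h : r₁ < r₂ generalizing r₁ r₂
  · rcases (not_lt.mp h).eq_or_lt with h' | h'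
    · exact h'.symm
    · exact (this hr₂ hr₁ h₂ h₁ h').symm
  by_contra hne
  set a := v + r₁ • unitVec ψ
  have hav : a ≠ v := add_smul_unitVec_ne hr₁.ne' ψ
  have hab : v + r₂ • unitVec ψ ≠ a := fun heq ↦ hne <|
    smul_left_injective ℝ (norm_ne_zero_iff.mp (by simp) : unitVec ψ ≠ 0)
      (add_left_cancel heq).symm
  have hmem : ∀ w ∈ V, w ≠ a → w ∈ convexHull ℝ ((V.erase a : Finset Plane) : Set Plane) :=
    fun w hw hwa ↦ subset_convexHull ℝ _ (by simp [hw, hwa])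
  apply hV.2 a h₁
  have hseg := (convex_convexHull ℝ ((V.erase a : Finset Plane) : Set Plane)).add_smul_mem
    (hmem v hv hav.symm) (hmem _ h₂ hab) (show r₁ / r₂ ∈ Icc (0 : ℝ) 1 from
      ⟨by positivity, (div_le_one hr₂).mpr h.le⟩)
  rwa [smul_smul, div_mul_cancel₀ _ hr₂.ne'] at hseg

lemma exists_subset_wedgeSet (hV : IsConvexPolygon V) (hv : v ∈ V) :
    ∃ β δ : ℝ, δ ∈ Ioo 0 π ∧ (V : Set Plane) ⊆ wedgeSet v (unitVec β) (unitVec (β + δ)) ∧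
      (∃ r : ℝ, 0 < r ∧ v + r • unitVec β ∈ V) ∧
      (∃ r : ℝ, 0 < r ∧ v + r • unitVec (β + δ) ∈ V) := by
  set W := V.erase v
  have hW : 1 < W.card := by rw [Finset.card_erase_of_mem hv]; have := hV.1; omega
  have hWne : W.Nonempty := Finset.card_pos.mp (by omega)
  obtain ⟨φ, hφ⟩ := exists_forall_inner_unitVec_pos (convex_convexHull ℝ _)
    (W.finite_toSet.isClosed_convexHull (𝕜 := ℝ)) (hV.2 v hv)
  choose! r hr ψ hψ hrep using fun w (hw : w ∈ W) ↦
    exists_polar_of_inner_unitVec_pos (hφ w (subset_convexHull ℝ _ hw))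
  have hwv : ∀ w ∈ W, w = v + r w • unitVec (ψ w) := fun w hw ↦ by rw [← hrep w hw]; abel
  obtain ⟨wβ, hwβ, hβ⟩ := Finset.exists_mem_eq_inf' hWne ψ
  obtain ⟨wγ, hwγ, hγ⟩ := Finset.exists_mem_eq_sup' hWne ψ
  set β := W.inf' hWne ψ
  set γ := W.sup' hWne ψ
  have hβγ : β < γ := by
    by_contra! hγβ
    have hψβ : ∀ w ∈ W, ψ w = β := fun w hw ↦
      le_antisymm ((Finset.le_sup' ψ hw).trans hγβ) (Finset.inf'_le ψ hw)
    obtain ⟨w₁, hw₁, w₂, hw₂, hne⟩ := Finset.one_lt_card.mp hW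
    have hmem : ∀ w ∈ W, v + r w • unitVec β ∈ V := fun w hw ↦ by
      rw [← hψβ w hw, ← hwv w hw]; exact Finset.mem_of_mem_erase hw
    apply hne
    rw [hwv w₁ hw₁, hwv w₂ hw₂, hψβ w₁ hw₁, hψβ w₂ hw₂,
      hV.eq_of_add_smul_unitVec_mem hv (hr w₁ hw₁) (hr w₂ hw₂) (hmem w₁ hw₁) (hmem w₂ hw₂)]
  refine ⟨β, γ - β, ⟨by linarith, by linarith [(hψ wβ hwβ).1, (hψ wγ hwγ).2]⟩, ?_,
    ⟨r wβ, hr wβ hwβ, ?_⟩, ⟨r wγ, hr wγ hwγ, ?_⟩⟩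
  · intro w hw
    by_cases hwv' : w = v
    · exact hwv' ▸ self_mem_wedgeSet
    have hwW : w ∈ W := Finset.mem_erase.mpr ⟨hwv', hw⟩
    rw [hwv w hwW]
    exact add_smul_unitVec_mem_wedgeSet ⟨by linarith, by linarith [(hψ wβ hwβ).1, (hψ wγ hwγ).2]⟩
      (hr w hwW).le ⟨Finset.inf'_le ψ hwW, by simpa using Finset.le_sup' ψ hwW⟩
  · rw [hβ, ← hwv wβ hwβ]; exact Finset.mem_of_mem_erase hwβ
  · rw [add_sub_cancel, hγ, ← hwv wγ hwγ]; exact Finset.mem_of_mem_erase hwγ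

end IsConvexPolygon

/-- For a strictly narrow vertex `v` (interior angle `< ω`), the set of bisector directions
of minimal `ω`-wedges with apex `v` is a closed arc of directions of angular width
exactly `ω - α(v)`. -/
theorem stmt_4 (V : Finset Plane) (hV : IsConvexPolygon V) (ω : ℝ) (hω : ω ∈ Set.Ioo 0 π)
    (v : Plane) (hv : v ∈ V)
    (hnarrow : interiorAngle (convexHull ℝ (V : Set Plane)) v < ω) :
    ∃ θ₀ : ℝ, wedgeDirs (convexHull ℝ (V : Set Plane)) ω v =
      {p | ∃ θ ∈ Set.Icc θ₀ (θ₀ + (ω - interiorAngle (convexHull ℝ (V : Set Plane)) v)),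
        p = unitVec θ} := by
  obtain ⟨β, δ, hδ, hV_sub, ⟨r₁, hr₁, h₁⟩, ⟨r₂, hr₂, h₂⟩⟩ := hV.exists_subset_wedgeSet hv
  have hP := convexHull_min hV_sub convex_wedgeSet
  have hα : interiorAngle (convexHull ℝ (V : Set Plane)) v = δ :=
    interiorAngle_eq_of_subset_wedgeSet hδ hP hr₁ (subset_convexHull ℝ _ h₁) hr₂
      (subset_convexHull ℝ _ h₂)
  rw [hα] at hnarrow ⊢
  refine ⟨β + δ - ω / 2, ?_⟩
  rw [wedgeDirs_eq_of_subset_wedgeSet hω hδ.1 hnarrow (subset_convexHull ℝ _ hv) hP hr₁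
    (subset_convexHull ℝ _ h₁) hr₂ (subset_convexHull ℝ _ h₂),
    show β + δ - ω / 2 + (ω - δ) = β + ω / 2 by ring]

end
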